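/- arXiv:1910.01614 — 3 statements merged into one kernel-verified Lean document; each statement's English description precedes it below -/
import Mathlib

section
/- Fix d ≥ 1 and let v_1, v_2, … be independent random vectors with v_i uniformly distributed on {0, 2^{i-1}}^d, and let U be an independent uniform random point of [0,1]^d. Let C_n be the random cubic partition of ℝ^d into cubes of side 2^n shifted by U + ∑_{i=1}^n v_i. Then for any two fixed points x, y ∈ ℝ^d, almost surely there exists N such that for all n ≥ N, x and y lie in the same cube of C_n. -/
open MeasureTheory ProbabilityTheory

/-- The half-open cube of the cubic partition of level `n` with shift `t`,
indexed by `k ∈ ℤ^d`: the set `t + 2^n k + [0, 2^n)^d`. -/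
def dyadicCube (d : ℕ) (t : Fin d → ℝ) (n : ℕ) (k : Fin d → ℤ) : Set (Fin d → ℝ) :=
  {x | ∀ i, t i + 2 ^ n * (k i : ℝ) ≤ x i ∧ x i < t i + 2 ^ n * ((k i : ℝ) + 1)}

/-!
Write `t = U j + ∑_{i ≤ n} v i j` for the shift in coordinate `j`. The points `x` and `y` lie in
different cells of level `n` exactly when a cell boundary `t + 2^n m` falls between them; rounding
down, `⌊t⌋` is then congruent modulo `2^n` to one of the boundedly many integers between
`⌊min x y⌋` and `⌊max x y⌋`. The digits `v i j ∈ {0, 2^(i-1)}` are integers, so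
`⌊t⌋ = ⌊U j⌋ + ∑ v i j`, and adding the independent fair digit `v n j` halves the mass of every
residue class modulo `2^n`. Hence separation at level `n` has probability `O(2^(-n))`, which is
summable, and Borel–Cantelli concludes.
-/

open Filter Finset AddCommGroup
open scoped ENNReal

lemma mem_dyadicCube_iff {d : ℕ} {t x : Fin d → ℝ} {n : ℕ} {k : Fin d → ℤ} :
    x ∈ dyadicCube d t n k ↔ ∀ i, ⌊(x i - t i) / 2 ^ n⌋ = k i := by
  have h2n : (0 : ℝ) < 2 ^ n := by positivity
  refine forall_congr' fun i => ?_
  rw [Int.floor_eq_iff, le_div_iff₀ h2n, div_lt_iff₀ h2n]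
  constructor <;> rintro ⟨h₁, h₂⟩ <;> constructor <;> linarith

lemma exists_mem_dyadicCube_iff {d : ℕ} {t x y : Fin d → ℝ} {n : ℕ} :
    (∃ k, x ∈ dyadicCube d t n k ∧ y ∈ dyadicCube d t n k) ↔
      ∀ i, ⌊(x i - t i) / 2 ^ n⌋ = ⌊(y i - t i) / 2 ^ n⌋ := by
  simp only [mem_dyadicCube_iff]
  constructor
  · rintro ⟨k, hx, hy⟩ i
    rw [hx, hy]
  · intro h
    exact ⟨_, fun i => rfl, fun i => (h i).symm⟩

lemma exists_floor_modEq_of_floor_div_ne {x y t : ℝ} {c : ℕ} (hc : 0 < c)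
    (h : ⌊(x - t) / c⌋ ≠ ⌊(y - t) / c⌋) :
    ∃ z ∈ Icc ⌊min x y⌋ ⌊max x y⌋, (⌊t⌋ : ℝ) ≡ z [PMOD (c : ℝ)] := by
  wlog hxy : x ≤ y generalizing x y
  · simpa only [min_comm, max_comm] using this h.symm (le_of_not_ge hxy)
  rw [min_eq_left hxy, max_eq_right hxy]
  have hc' : (0 : ℝ) < c := by exact_mod_cast hc
  set m := ⌊(y - t) / c⌋
  have hlt : ⌊(x - t) / c⌋ < m :=
    lt_of_le_of_ne (Int.floor_le_floor (by gcongr)) h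
  have hy : t + c * m ≤ y := by
    have := (le_div_iff₀ hc').1 (Int.floor_le ((y - t) / c)); linarith
  have hx : x < t + c * m := by
    have h₁ := (div_lt_iff₀ hc').1 (Int.lt_floor_add_one ((x - t) / c))
    have h₂ : (⌊(x - t) / c⌋ : ℝ) + 1 ≤ m := by exact_mod_cast hlt
    have := mul_le_mul_of_nonneg_left h₂ hc'.le
    linarith
  refine ⟨⌊t⌋ + c * m, mem_Icc.2 ⟨?_, ?_⟩, modEq_iff_zsmul'.2 ⟨m, by push_cast; ring⟩⟩
  · rw [← Int.lt_add_one_iff, Int.floor_lt]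
    have := Int.lt_floor_add_one t
    push_cast; linarith
  · rw [Int.le_floor]
    have := Int.floor_le t
    push_cast; linarith

lemma floor_add_sum_of_forall_eq_intCast {ι : Type*} {s : Finset ι} {u : ℝ} {w : ι → ℝ}
    (hw : ∀ i ∈ s, ∃ k : ℤ, w i = k) :
    (⌊u + ∑ i ∈ s, w i⌋ : ℝ) = ⌊u⌋ + ∑ i ∈ s, w i := by
  choose! k hk using hw
  rw [sum_congr rfl hk, ← Int.cast_sum, Int.floor_add_intCast, Int.cast_add]

lemma measurableSet_setOf_modEq (p s : ℝ) : MeasurableSet {t : ℝ | t ≡ s [PMOD p]} := by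
  refine ((Set.countable_range fun m : ℤ => s - m • p).mono fun t ht => ?_).measurableSet
  obtain ⟨m, hm⟩ := modEq_iff_zsmul'.1 ht
  exact ⟨m, show s - m • p = t by rw [← hm]; ring⟩

lemma not_add_modEq_two_mul_of_modEq {c t s : ℝ} (hc : c ≠ 0) (h₀ : t ≡ s [PMOD 2 * c]) :
    ¬ t + c ≡ s [PMOD 2 * c] := by
  intro h₁
  obtain ⟨m, hm⟩ := modEq_zero_iff_eq_zsmul.1 (add_modEq_left.1 (h₁.trans h₀.symm))
  have : (1 : ℝ) = 2 * m := by
    apply mul_right_cancel₀ hc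
    rw [zsmul_eq_mul] at hm
    linarith
  have : (1 : ℤ) = 2 * m := by exact_mod_cast this
  omega

section

variable {Ω : Type*} [MeasurableSpace Ω] {P : Measure Ω}

lemma measure_add_modEq_le {X ε : Ω → ℝ} (hX : Measurable X)
    (hind : IndepFun X ε P) {c : ℝ} (hc : c ≠ 0) (hval : ∀ᵐ ω ∂P, ε ω = 0 ∨ ε ω = c)
    (h₀ : P {ω | ε ω = 0} ≤ 2⁻¹) (h₁ : P {ω | ε ω = c} ≤ 2⁻¹) (s : ℝ) :
    P {ω | X ω + ε ω ≡ s [PMOD 2 * c]} ≤ 2⁻¹ * P {ω | X ω ≡ s [PMOD c]} := by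
  -- `X + ε ≡ s [PMOD 2c]` puts `X` in one of two disjoint classes mod `2c` making up one mod `c`
  set A : ℝ → Set ℝ := fun a => {t | t + a ≡ s [PMOD 2 * c]}
  have hA : ∀ a, MeasurableSet (A a) := fun a =>
    (measurableSet_setOf_modEq _ _).preimage (measurable_add_const a)
  have hsplit : {ω | X ω + ε ω ≡ s [PMOD 2 * c]} ≤ᵐ[P]
      (X ⁻¹' A 0 ∩ ε ⁻¹' {0} ∪ X ⁻¹' A c ∩ ε ⁻¹' {c} : Set Ω) := by
    filter_upwards [hval] with ω hω (hmem : X ω + ε ω ≡ s [PMOD 2 * c])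
    rcases hω with h | h
    · exact .inl ⟨by simpa [A, h] using hmem, h⟩
    · exact .inr ⟨by simpa [A, h] using hmem, h⟩
  have hdisj : Disjoint (X ⁻¹' A 0) (X ⁻¹' A c) :=
    Set.disjoint_left.2 fun ω h₀ => not_add_modEq_two_mul_of_modEq hc (by simpa [A] using h₀)
  have hcoarse : X ⁻¹' A 0 ∪ X ⁻¹' A c ⊆ {ω | X ω ≡ s [PMOD c]} := by
    have of_two_mul {a : ℝ} (h : a ≡ s [PMOD 2 * c]) : a ≡ s [PMOD c] :=
      ModEq.of_nsmul (n := 2) (by rwa [two_nsmul, ← two_mul])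
    rintro ω (h | h)
    · exact of_two_mul (by simpa [A] using h)
    · exact (add_modEq_left.2 self_modEq_zero).symm.trans (of_two_mul h)
  calc P {ω | X ω + ε ω ≡ s [PMOD 2 * c]}
      ≤ P (X ⁻¹' A 0 ∩ ε ⁻¹' {0}) + P (X ⁻¹' A c ∩ ε ⁻¹' {c}) :=
        (measure_mono_ae hsplit).trans (measure_union_le _ _)
    _ = P (X ⁻¹' A 0) * P {ω | ε ω = 0} + P (X ⁻¹' A c) * P {ω | ε ω = c} := by
        rw [hind.measure_inter_preimage_eq_mul _ _ (hA 0) (measurableSet_singleton 0),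
          hind.measure_inter_preimage_eq_mul _ _ (hA c) (measurableSet_singleton c)]
        rfl
    _ ≤ P (X ⁻¹' A 0) * 2⁻¹ + P (X ⁻¹' A c) * 2⁻¹ := by gcongr
    _ = 2⁻¹ * P (X ⁻¹' A 0 ∪ X ⁻¹' A c) := by
        rw [measure_union hdisj (hX (hA c))]; ring
    _ ≤ 2⁻¹ * P {ω | X ω ≡ s [PMOD c]} := by gcongr

lemma measure_sum_range_modEq_le [IsProbabilityMeasure P] {r : ℕ → Ω → ℝ}
    (hmeas : ∀ i, Measurable (r i)) (hind : iIndepFun r P)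
    (hval : ∀ n, ∀ᵐ ω ∂P, r (n + 1) ω = 0 ∨ r (n + 1) ω = 2 ^ n)
    (h₀ : ∀ n, P {ω | r (n + 1) ω = 0} ≤ 2⁻¹) (h₁ : ∀ n, P {ω | r (n + 1) ω = 2 ^ n} ≤ 2⁻¹)
    (n : ℕ) (s : ℝ) :
    P {ω | ∑ i ∈ range (n + 1), r i ω ≡ s [PMOD 2 ^ n]} ≤ 2⁻¹ ^ n := by
  induction n with
  | zero => simpa using prob_le_one
  | succ n ih =>
    have hX : Measurable fun ω => ∑ i ∈ range (n + 1), r i ω :=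
      Finset.measurable_sum _ fun i _ => hmeas i
    have hind' : IndepFun (fun ω => ∑ i ∈ range (n + 1), r i ω) (r (n + 1)) P := by
      simpa only [← Finset.sum_fn] using
        hind.indepFun_finsetSum_of_notMem hmeas (notMem_range_self (n := n + 1))
    simp only [sum_range_succ _ (n + 1), pow_succ']
    calc _ ≤ 2⁻¹ * P {ω | ∑ i ∈ range (n + 1), r i ω ≡ s [PMOD 2 ^ n]} :=
          measure_add_modEq_le hX hind' (by positivity) (hval n) (h₀ n) (h₁ n) s
      _ ≤ 2⁻¹ * 2⁻¹ ^ n := by gcongr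

lemma measure_apply_eq_le_inv_two {ι : Type*} [Fintype ι] [DecidableEq ι] {w : Ω → ι → ℝ}
    {c : ℝ} (hc : c ≠ 0) (hval : ∀ᵐ ω ∂P, ∀ k, w ω k = 0 ∨ w ω k = c)
    (hunif : ∀ f : ι → ℝ, (∀ k, f k = 0 ∨ f k = c) → P {ω | w ω = f} = 2⁻¹ ^ Fintype.card ι)
    (j : ι) {a : ℝ} (ha : a = 0 ∨ a = c) :
    P {ω | w ω j = a} ≤ 2⁻¹ := by
  set F := Fintype.piFinset fun k => if k = j then {a} else ({0, c} : Finset ℝ)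
  have hF : ∀ f ∈ F, ∀ k, f k = 0 ∨ f k = c := by
    intro f hf k
    have := Fintype.mem_piFinset.1 hf k
    split_ifs at this <;> simp_all
  have hcard : F.card = 2 ^ (Fintype.card ι - 1) := by
    rw [Fintype.card_piFinset]
    simp [apply_ite, card_pair hc.symm, prod_ite, filter_ne', card_univ]
  have : Nonempty ι := ⟨j⟩
  obtain ⟨m, hm⟩ := Nat.exists_eq_add_one_of_ne_zero (Fintype.card_ne_zero (α := ι))
  calc P {ω | w ω j = a} ≤ P (⋃ f ∈ F, {ω | w ω = f}) := by
        refine measure_mono_ae ?_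
        filter_upwards [hval] with ω hω (hωj : w ω j = a)
        refine Set.mem_biUnion (x := w ω) (Fintype.mem_piFinset.2 fun k => ?_) rfl
        split_ifs with hk
        · simp [hk, hωj]
        · rcases hω k with h | h <;> simp [h]
    _ ≤ ∑ f ∈ F, P {ω | w ω = f} := measure_biUnion_finset_le _ _
    _ = 2 ^ (Fintype.card ι - 1) * 2⁻¹ ^ Fintype.card ι := by
        rw [Finset.sum_congr rfl fun f hf => hunif f (hF f hf), sum_const, hcard, nsmul_eq_mul]
        push_cast; rfl
    _ = 2⁻¹ := by
        rw [hm, Nat.add_sub_cancel, pow_succ, ← mul_assoc, ← mul_pow,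
          ENNReal.mul_inv_cancel two_ne_zero ENNReal.ofNat_ne_top, one_pow, one_mul]

lemma ae_eventually_notMem_of_le_geometric {s : ℕ → Set Ω} {C r : ℝ≥0∞} (hC : C ≠ ∞)
    (hr : r < 1) (hs : ∀ n, P (s n) ≤ C * r ^ n) : ∀ᵐ ω ∂P, ∀ᶠ n in atTop, ω ∉ s n := by
  refine ae_eventually_notMem (ne_top_of_le_ne_top ?_ (ENNReal.tsum_le_tsum hs))
  rw [ENNReal.tsum_mul_left]
  exact ENNReal.mul_ne_top hC (tsum_geometric_lt_top.2 hr).ne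

lemma measure_floor_add_sum_modEq_le [IsProbabilityMeasure P] {d : ℕ} {U : Ω → (Fin d → ℝ)}
    {v : ℕ → Ω → (Fin d → ℝ)} (hUmeas : Measurable U) (hvmeas : ∀ i, Measurable (v i))
    (hvval : ∀ i, 1 ≤ i → P {ω | ∀ j, v i ω j = 0 ∨ v i ω j = 2 ^ (i - 1)} = 1)
    (hvunif : ∀ i, 1 ≤ i → ∀ f : Fin d → ℝ, (∀ j, f j = 0 ∨ f j = 2 ^ (i - 1)) →
      P {ω | v i ω = f} = (1 / 2) ^ d)
    (hindep : iIndepFun (fun i : ℕ => if i = 0 then U else v i) P) (j : Fin d) (n : ℕ) (s : ℝ) :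
    P {ω | (⌊U ω j + ∑ i ∈ Icc 1 n, v i ω j⌋ : ℝ) ≡ s [PMOD 2 ^ n]} ≤ 2⁻¹ ^ n := by
  have hv : ∀ i, ∀ᵐ ω ∂P, ∀ k, v (i + 1) ω k = 0 ∨ v (i + 1) ω k = 2 ^ i := fun i =>
    (ae_iff_measure_eq (by measurability)).2 (by simpa using hvval (i + 1) (by omega))
  -- with `r 0 = ⌊U j⌋`, the integer digits give `∑ i ∈ range (n + 1), r i = ⌊U j + ∑ v i j⌋` a.s.
  set r : ℕ → Ω → ℝ := fun i ω => if i = 0 then ⌊U ω j⌋ else v i ω j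
  have hr : iIndepFun r P := by
    convert hindep.comp (fun i p => if i = 0 then (⌊p j⌋ : ℝ) else p j)
      (fun i => by split_ifs <;> fun_prop) using 1
    funext i ω
    by_cases hi : i = 0 <;> simp [r, hi]
  have hrmeas : ∀ i, Measurable (r i) := fun i => by
    by_cases hi : i = 0 <;> simp only [r, hi, if_true, if_false] <;> fun_prop
  have hrval := fun i => (hv i).mono fun ω hω => hω j
  have hrunif (i : ℕ) {a : ℝ} (ha : a = 0 ∨ a = 2 ^ i) : P {ω | r (i + 1) ω = a} ≤ 2⁻¹ :=
    measure_apply_eq_le_inv_two (w := v (i + 1)) (by positivity) (hv i)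
      (by simpa using hvunif (i + 1) (by omega)) j ha
  refine le_trans (measure_mono_ae ?_) (measure_sum_range_modEq_le hrmeas hr hrval
    (fun i => hrunif i (.inl rfl)) (fun i => hrunif i (.inr rfl)) n s)
  filter_upwards [ae_all_iff.2 hv] with ω hω (hmem : _ ≡ s [PMOD 2 ^ n])
  have hint : ∀ i ∈ Icc 1 n, ∃ k : ℤ, v i ω j = k := by
    intro i hi
    obtain ⟨i, rfl⟩ := Nat.exists_eq_add_one_of_ne_zero (Nat.one_le_iff_ne_zero.1 (mem_Icc.1 hi).1)
    rcases hω i j with h | h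
    · exact ⟨0, by simp [h]⟩
    · exact ⟨2 ^ i, by simp [h]⟩
  have hsum : ∑ i ∈ range (n + 1), r i ω = ⌊U ω j⌋ + ∑ i ∈ Icc 1 n, v i ω j := by
    rw [range_eq_Ico, sum_eq_sum_Ico_succ_bot n.succ_pos, zero_add, Nat.succ_eq_add_one,
      Ico_add_one_right_eq_Icc]
    refine congrArg₂ (· + ·) rfl (sum_congr rfl fun i hi => ?_)
    simp [r, Nat.one_le_iff_ne_zero.1 (mem_Icc.1 hi).1]
  rw [floor_add_sum_of_forall_eq_intCast hint] at hmem
  exact (show _ ≡ s [PMOD 2 ^ n] by rwa [hsum])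

end

theorem stmt7_general (d : ℕ)
    {Ω : Type*} [MeasurableSpace Ω] (P : Measure Ω) [IsProbabilityMeasure P]
    (U : Ω → (Fin d → ℝ)) (v : ℕ → Ω → (Fin d → ℝ))
    (hUmeas : Measurable U) (hvmeas : ∀ i, Measurable (v i))
    -- each `v i`, `i ≥ 1`, is uniform on `{0, 2^(i-1)}^d`
    (hvval : ∀ i, 1 ≤ i → P {ω | ∀ j, v i ω j = 0 ∨ v i ω j = 2 ^ (i - 1)} = 1)
    (hvunif : ∀ i, 1 ≤ i → ∀ f : Fin d → ℝ, (∀ j, f j = 0 ∨ f j = 2 ^ (i - 1)) →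
      P {ω | v i ω = f} = (1 / 2) ^ d)
    -- `U, v₁, v₂, …` are independent
    (hindep : iIndepFun
      (fun i : ℕ => if i = 0 then U else v i) P) :
    ∀ x y : Fin d → ℝ, ∀ᵐ ω ∂P, ∃ N : ℕ, ∀ n, N ≤ n → ∃ k : Fin d → ℤ,
      x ∈ dyadicCube d (U ω + ∑ i ∈ Finset.Icc 1 n, v i ω) n k ∧
      y ∈ dyadicCube d (U ω + ∑ i ∈ Finset.Icc 1 n, v i ω) n k := by
  intro x y
  set Z : Fin d → Finset ℤ := fun j => Icc ⌊min (x j) (y j)⌋ ⌊max (x j) (y j)⌋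
  set B : ℕ → Set Ω := fun n => ⋃ j, ⋃ z ∈ Z j,
    {ω | (⌊U ω j + ∑ i ∈ Icc 1 n, v i ω j⌋ : ℝ) ≡ z [PMOD 2 ^ n]}
  have hB (n : ℕ) : P (B n) ≤ (∑ j, #(Z j) : ℕ) * 2⁻¹ ^ n := by
    refine (measure_iUnion_fintype_le _ _).trans ?_
    rw [Nat.cast_sum, sum_mul]
    refine sum_le_sum fun j _ => (measure_biUnion_finset_le _ _).trans ?_
    refine (sum_le_sum fun (z : ℤ) _ => measure_floor_add_sum_modEq_le hUmeas hvmeas hvval hvunif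
      hindep j n (z : ℝ)).trans_eq ?_
    rw [sum_const, nsmul_eq_mul]
  filter_upwards [ae_eventually_notMem_of_le_geometric (by simp)
    (by norm_num) hB] with ω hω
  obtain ⟨N, hN⟩ := eventually_atTop.1 hω
  refine ⟨N, fun n hn => exists_mem_dyadicCube_iff.2 fun j => by_contra fun hne => hN n hn ?_⟩
  obtain ⟨z, hz, hmod⟩ := exists_floor_modEq_of_floor_div_ne (c := 2 ^ n) (by positivity)
    (by simpa using hne)
  exact Set.mem_iUnion.2 ⟨j, Set.mem_iUnion₂.2 ⟨z, hz, by simpa using hmod⟩⟩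

theorem stmt7 (d : ℕ) (hd : 1 ≤ d)
    {Ω : Type*} [MeasurableSpace Ω] (P : Measure Ω) [IsProbabilityMeasure P]
    (U : Ω → (Fin d → ℝ)) (v : ℕ → Ω → (Fin d → ℝ))
    (hUmeas : Measurable U) (hvmeas : ∀ i, Measurable (v i))
    -- `U` is uniform on the unit cube `[0,1]^d`
    (hU : P.map U = volume.restrict (Set.univ.pi fun _ => Set.Icc (0:ℝ) 1))
    -- each `v i`, `i ≥ 1`, is uniform on `{0, 2^(i-1)}^d`
    (hvval : ∀ i, 1 ≤ i → P {ω | ∀ j, v i ω j = 0 ∨ v i ω j = 2 ^ (i - 1)} = 1)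
    (hvunif : ∀ i, 1 ≤ i → ∀ f : Fin d → ℝ, (∀ j, f j = 0 ∨ f j = 2 ^ (i - 1)) →
      P {ω | v i ω = f} = (1 / 2) ^ d)
    -- `U, v₁, v₂, …` are independent
    (hindep : iIndepFun
      (fun i : ℕ => if i = 0 then U else v i) P) :
    ∀ x y : Fin d → ℝ, ∀ᵐ ω ∂P, ∃ N : ℕ, ∀ n, N ≤ n → ∃ k : Fin d → ℤ,
      x ∈ dyadicCube d (U ω + ∑ i ∈ Finset.Icc 1 n, v i ω) n k ∧
      y ∈ dyadicCube d (U ω + ∑ i ∈ Finset.Icc 1 n, v i ω) n k :=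
  stmt7_general d P U v hUmeas hvmeas hvval hvunif hindep
end

section
/- Let U ⊆ ℝ^3 be a nonempty open connected set and let F ⊆ ℝ^3 be a finite union of line segments (each segment being the convex hull of two points). Then U \ F is path-connected (and in particular connected). -/
/-!
Segments and planes are null for Lebesgue measure, so finitely many of them have dense complement.
In a convex open set `C ⊆ ℝ³`, two points `x`, `y` off the segments are then joined by a broken line
`x z y` with `z ∈ C` outside every plane spanned by `x` or `y` and a segment; such a broken line
misses all segments. Since every point of `U` has a ball around it, a connectedness argument over
`U` glues these local paths together.
-/

open Set Filter Topology Module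

section AffineSpan

variable {k V P : Type*} [DivisionRing k] [AddCommGroup V] [Module k V] [AddTorsor V P]

theorem affineSpan_ne_top_of_rank_vectorSpan_lt {s : Set P}
    (h : Module.rank k (vectorSpan k s) < Module.rank k V) : affineSpan k s ≠ ⊤ := fun hs => by
  rw [AffineSubspace.vectorSpan_eq_top_of_affineSpan_eq_top k V P hs, rank_top] at h
  exact h.false

end AffineSpan

section Segment

variable {E : Type*} [AddCommGroup E] [Module ℝ E]

theorem segment_subset_affineSpan (a b : E) : segment ℝ a b ⊆ line[ℝ, a, b] :=
  (AffineSubspace.convex _).segment_subset (left_mem_affineSpan_pair ℝ a b)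
    (right_mem_affineSpan_pair ℝ a b)

/-- A common point `w ≠ x` would put `z` on the line `x w`, inside the plane through `x, a, b`. -/
theorem disjoint_segment_of_notMem_affineSpan {x z a b : E} (hx : x ∉ segment ℝ a b)
    (hz : z ∉ affineSpan ℝ {x, a, b}) : Disjoint (segment ℝ x z) (segment ℝ a b) := by
  rw [Set.disjoint_left, segment_eq_image_lineMap]
  rintro _ ⟨t, -, rfl⟩ hab
  have ht : t ≠ 0 := by
    rintro rfl
    exact hx (by simpa using hab)
  have hx' : x ∈ affineSpan ℝ {x, a, b} := subset_affineSpan ℝ _ (by simp)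
  have hw : AffineMap.lineMap x z t ∈ affineSpan ℝ {x, a, b} :=
    (AffineSubspace.convex _).segment_subset (subset_affineSpan ℝ _ (by simp))
      (subset_affineSpan ℝ _ (by simp)) hab
  apply hz
  simpa [AffineMap.lineMap_lineMap_right, inv_mul_cancel₀ ht] using
    AffineMap.lineMap_mem t⁻¹ hx' hw

theorem segment_subset_diff_biUnion_segment {C : Set E} (hC : Convex ℝ C) {S : Set (E × E)}
    {w z : E} (hw : w ∈ C \ ⋃ p ∈ S, segment ℝ p.1 p.2) (hz : z ∈ C)
    (hzS : ∀ p ∈ S, z ∉ affineSpan ℝ {w, p.1, p.2}) :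
    segment ℝ w z ⊆ C \ ⋃ p ∈ S, segment ℝ p.1 p.2 := by
  refine subset_sdiff.2 ⟨hC.segment_subset hw.1 hz, ?_⟩
  simp only [disjoint_iUnion_right]
  exact fun p hp => disjoint_segment_of_notMem_affineSpan
    (fun h => hw.2 (mem_biUnion hp h)) (hzS p hp)

end Segment

section FiniteDimensional

variable {E : Type*} [NormedAddCommGroup E] [NormedSpace ℝ E] [FiniteDimensional ℝ E]

theorem dense_compl_biUnion_affineSubspace {ι : Type*} {s : Set ι} (hs : s.Countable)
    {A : ι → AffineSubspace ℝ E} (hA : ∀ i ∈ s, A i ≠ ⊤) :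
    Dense (⋃ i ∈ s, (A i : Set E))ᶜ := by
  borelize E
  refine interior_eq_empty_iff_dense_compl.1
    (MeasureTheory.Measure.addHaar.interior_eq_empty_of_null ?_)
  exact (MeasureTheory.measure_biUnion_null_iff hs).2 fun i hi =>
    MeasureTheory.Measure.addHaar_affineSubspace _ _ (hA i hi)

theorem dense_compl_biUnion_segment (hE : 1 < finrank ℝ E) {S : Set (E × E)}
    (hS : S.Countable) : Dense (⋃ p ∈ S, segment ℝ p.1 p.2)ᶜ := by
  refine (dense_compl_biUnion_affineSubspace hS fun p _ =>
    affineSpan_ne_top_of_rank_vectorSpan_lt ?_).mono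
      (compl_subset_compl.2 (biUnion_mono subset_rfl fun p _ => segment_subset_affineSpan _ _))
  rw [← finrank_eq_rank ℝ E]
  exact (collinear_pair ℝ p.1 p.2).trans_lt (by exact_mod_cast hE)

theorem Convex.isPathConnected_diff_biUnion_segment (hE : 2 < finrank ℝ E) {C : Set E}
    (hC : Convex ℝ C) (hCo : IsOpen C) (hne : C.Nonempty) {S : Set (E × E)}
    (hS : S.Countable) : IsPathConnected (C \ ⋃ p ∈ S, segment ℝ p.1 p.2) := by
  rw [isPathConnected_iff]
  refine ⟨(dense_compl_biUnion_segment (by omega) hS).inter_open_nonempty C hCo hne,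
    fun x hx y hy => ?_⟩
  have hplanes : ∀ q ∈ ({x, y} : Set E) ×ˢ S, affineSpan ℝ {q.1, q.2.1, q.2.2} ≠ ⊤ := by
    refine fun q _ => affineSpan_ne_top_of_rank_vectorSpan_lt ?_
    rw [← finrank_eq_rank ℝ E]
    exact (coplanar_triple ℝ q.1 q.2.1 q.2.2).trans_lt (by exact_mod_cast hE)
  obtain ⟨z, hzC, hz⟩ := (dense_compl_biUnion_affineSubspace
    (((toFinite _).countable).prod hS) hplanes).inter_open_nonempty C hCo hne
  simp only [mem_compl_iff, mem_iUnion, not_exists, mem_prod, mem_insert_iff,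
    mem_singleton_iff] at hz
  have hxz := segment_subset_diff_biUnion_segment hC hx hzC fun p hp h => hz (x, p) ⟨by simp, hp⟩ h
  have hyz := segment_subset_diff_biUnion_segment hC hy hzC fun p hp h => hz (y, p) ⟨by simp, hp⟩ h
  exact (JoinedIn.of_segment_subset hxz).trans (JoinedIn.of_segment_subset hyz).symm

end FiniteDimensional

/-- Points of `U` are related when small neighbourhoods of them can be joined in `U \ F`; local
path-connectedness makes the relation locally constant, and density of `Fᶜ` makes it transitive. -/
theorem IsConnected.isPathConnected_diff_of_forall_nhds {X : Type*} [TopologicalSpace X]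
    {U F : Set X} (hU : IsConnected U) (hF : Dense Fᶜ)
    (hloc : ∀ x ∈ U, ∃ N ∈ 𝓝 x, N ⊆ U ∧ IsPathConnected (N \ F)) :
    IsPathConnected (U \ F) := by
  let P : X → X → Prop := fun x y => ∃ N ∈ 𝓝 x, ∃ M ∈ 𝓝 y,
    ∀ x' ∈ N \ F, ∀ y' ∈ M \ F, JoinedIn (U \ F) x' y'
  have hP : ∀ x ∈ U, ∀ y ∈ U, P x y := by
    refine fun x hx y hy => hU.isPreconnected.induction₂' P (fun p hp => ?_) ?_ hx hy
    · obtain ⟨N, hN, hNU, hNF⟩ := hloc p hp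
      have hJ : ∀ x' ∈ N \ F, ∀ y' ∈ N \ F, JoinedIn (U \ F) x' y' := fun x' hx' y' hy' =>
        (hNF.joinedIn x' hx' y' hy').mono (sdiff_subset_sdiff_left hNU)
      filter_upwards [nhdsWithin_le_nhds (eventually_mem_nhds_iff.2 hN)] with y hy
      exact ⟨⟨N, hN, N, hy, hJ⟩, ⟨N, hy, N, hN, hJ⟩⟩
    · rintro x y z - - - ⟨N₁, hN₁, M₁, hM₁, hJ₁⟩ ⟨N₂, hN₂, M₂, hM₂, hJ₂⟩
      obtain ⟨y', hy'F, hy'M₁, hy'N₂⟩ := hF.inter_nhds_nonempty (inter_mem hM₁ hN₂)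
      exact ⟨N₁, hN₁, M₂, hM₂, fun x' hx' z' hz' =>
        (hJ₁ x' hx' y' ⟨hy'M₁, hy'F⟩).trans (hJ₂ y' ⟨hy'N₂, hy'F⟩ z' hz')⟩
  obtain ⟨x₀, hx₀⟩ := hU.nonempty
  obtain ⟨N, -, hNU, hNF⟩ := hloc x₀ hx₀
  refine isPathConnected_iff.2 ⟨hNF.nonempty.mono (sdiff_subset_sdiff_left hNU),
    fun x hx y hy => ?_⟩
  obtain ⟨N, hN, M, hM, hJ⟩ := hP x hx.1 y hy.1
  exact hJ x ⟨mem_of_mem_nhds hN, hx.2⟩ y ⟨mem_of_mem_nhds hM, hy.2⟩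

theorem stmt8 (U : Set (Fin 3 → ℝ)) (hU : IsOpen U) (hUconn : IsConnected U)
    (S : Finset ((Fin 3 → ℝ) × (Fin 3 → ℝ))) :
    IsPathConnected (U \ ⋃ p ∈ S, segment ℝ p.1 p.2) ∧
    IsConnected (U \ ⋃ p ∈ S, segment ℝ p.1 p.2) := by
  have hdim : 2 < finrank ℝ (Fin 3 → ℝ) := by simp
  have hpath : IsPathConnected (U \ ⋃ p ∈ S, segment ℝ p.1 p.2) := by
    refine hUconn.isPathConnected_diff_of_forall_nhds
      (dense_compl_biUnion_segment (by omega) S.countable_toSet) fun x hx => ?_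
    obtain ⟨r, hr, hrU⟩ := Metric.isOpen_iff.1 hU x hx
    exact ⟨Metric.ball x r, Metric.ball_mem_nhds x hr, hrU,
      (convex_ball x r).isPathConnected_diff_biUnion_segment hdim Metric.isOpen_ball
        (Metric.nonempty_ball.2 hr) S.countable_toSet⟩
  exact ⟨hpath, hpath.isConnected⟩
end

section
/- Let S be a countably infinite set and let (P_n)_{n≥1} be a sequence of partitions of S such that: every part of every P_n is finite, P_{n+1} is coarser than P_n (every part of P_n is contained in a part of P_{n+1}), and for any two elements x, y ∈ S there exists n with x and y in the same part of P_n. Then there exists a linear order ≤ on S, order-isomorphic to (ℤ, ≤), such that every part of every partition P_n is an interval of this order. -/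
/-!
Adjoin the discrete partition below `P 0` and encode each `x` by a finitely supported sequence
whose entry `n + 1` labels the `P n`-class of `x`, the class of a base point `x₀` getting label `0`.
Comparing codes at their last differing entry (the colex order) gives a linear order in which the
`P n`-classes, being the sets of codes with a prescribed tail beyond `n`, are intervals; hence
closed intervals are finite. Since `S` is infinite, the class of `x₀` grows infinitely often;
giving the labels of level `n` the sign `(-1) ^ (number of growth steps below n)` places the new
elements alternately above and below it, so the order has no endpoints and is that of `ℤ`.
-/

namespace Finsupp.Colex

variable {α N : Type*} [LinearOrder α] [LinearOrder N] [Zero N]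

theorem monotone_filter_lt (i : α) :
    Monotone fun f : Colex (α →₀ N) => toColex ((ofColex f).filter (i < ·)) := by
  intro f g hfg
  obtain rfl | hlt := hfg.eq_or_lt
  · rfl
  obtain ⟨j, hagree, hj⟩ := Colex.lt_iff.1 hlt
  by_cases hij : i < j
  · refine (Colex.lt_iff.2 ⟨j, fun k hjk => ?_, ?_⟩).le
    · simp only [ofColex_toColex, filter_apply, hagree k hjk]
    · simpa only [ofColex_toColex, filter_apply, if_pos hij] using hj
  · refine congrArg toColex (ext fun k => ?_) |>.le
    simp only [filter_apply]
    split_ifs with hik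
    · exact hagree k (lt_of_not_ge fun hkj => hij (hik.trans_le hkj))
    · rfl

theorem ordConnected_setOf_forall_lt_eq (i : α) (a : α →₀ N) :
    {c : Colex (α →₀ N) | ∀ j, i < j → a j = ofColex c j}.OrdConnected := by
  refine ⟨fun c₁ h₁ c₂ h₂ c ⟨h₁c, hc₂⟩ j hij => ?_⟩
  have h₁₂ : (ofColex c₁).filter (i < ·) = (ofColex c₂).filter (i < ·) := by
    ext k
    simp only [filter_apply]
    split_ifs with hik
    · rw [← h₁ k hik, ← h₂ k hik]
    · rfl
  have hc : (ofColex c).filter (i < ·) = (ofColex c₁).filter (i < ·) :=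
    toColex_inj.1 <| le_antisymm (h₁₂ ▸ monotone_filter_lt i hc₂) (monotone_filter_lt i h₁c)
  simpa only [filter_apply_pos _ _ hij, ← h₁ j hij] using (DFunLike.congr_fun hc j).symm

end Finsupp.Colex

theorem Nat.exists_ge_count_eq {p : ℕ → Prop} [DecidablePred p] (hp : {k | p k}.Infinite)
    {n m : ℕ} (hnm : n ≤ m) : ∃ k, n ≤ k ∧ p k ∧ Nat.count p k = m :=
  ⟨nth p m, hnm.trans (nth_strictMono hp).le_apply, nth_mem_of_infinite hp m,
    count_nth_of_infinite hp m⟩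

theorem nonempty_orderIso_int_of_finite_Icc {ι : Type*} [LinearOrder ι] [Nonempty ι]
    [NoMaxOrder ι] [NoMinOrder ι] (h : ∀ a b : ι, (Set.Icc a b).Finite) : Nonempty (ι ≃o ℤ) := by
  let := LocallyFiniteOrder.ofFiniteIcc h
  let := LinearLocallyFiniteOrder.succOrder ι
  let := LinearLocallyFiniteOrder.predOrder ι
  exact ⟨orderIsoIntOfLinearSuccPredArch⟩

theorem Equivalence.exists_nat_label {S : Type*} [Countable S] {r : S → S → Prop}
    (hr : Equivalence r) (x₀ : S) : ∃ ℓ : S → ℕ, ℓ x₀ = 0 ∧ ∀ x y, ℓ x = ℓ y ↔ r x y := by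
  let s : Setoid S := ⟨r, hr⟩
  obtain ⟨g, hg⟩ := exists_injective_nat (Quotient s)
  refine ⟨fun x => Equiv.swap (g ⟦x₀⟧) 0 (g ⟦x⟧), Equiv.swap_apply_left _ _, fun x y => ?_⟩
  exact (Equiv.injective _).eq_iff.trans (hg.eq_iff.trans Quotient.eq)

section Exhaustion

variable {S : Type*} {P : ℕ → S → S → Prop}

theorem infinite_setOf_exists_class_growth [Infinite S] (hmono : Monotone P)
    (hfin : ∀ n x, {y | P n x y}.Finite) (hexh : ∀ x y, ∃ n, P n x y) (x₀ : S) :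
    {k | ∃ y, P (k + 1) x₀ y ∧ ¬ P k x₀ y}.Infinite := by
  intro hgrow
  obtain ⟨N, hN⟩ := hgrow.bddAbove
  have hstable : ∀ k, N < k → ∀ y, P k x₀ y → P (N + 1) x₀ y := by
    intro k hk
    induction k, hk using Nat.le_induction with
    | base => exact fun y hy => hy
    | succ k hk ih =>
      exact fun y hy => ih y (by_contra fun hky => (hN ⟨y, hy, hky⟩).not_gt hk)
  refine Set.infinite_univ ((hfin (N + 1) x₀).subset fun y _ => ?_)
  obtain ⟨m, hm⟩ := hexh x₀ y
  exact hstable (max m (N + 1)) (by omega) y (hmono (le_max_left _ _) _ _ hm)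

theorem exists_colex_code_of_sign [Countable S] (hequiv : ∀ n, Equivalence (P n))
    (hmono : Monotone P) (hexh : ∀ x y, ∃ n, P n x y) (x₀ : S) (σ : ℕ → ℤ) (hσ : ∀ n, σ n ≠ 0) :
    ∃ code : S → ℕ →₀ ℤ, Function.Injective code ∧
      (∀ n x y, P n x y ↔ ∀ k, n < k → code x k = code y k) ∧
      (∀ n x, P n x₀ x → code x (n + 1) = 0) ∧
      (∀ n x, ¬ P n x₀ x → 0 < σ n * code x (n + 1)) := by
  obtain ⟨e, he⟩ := exists_injective_nat S
  choose ℓ hℓ₀ hℓ using fun n => (hequiv n).exists_nat_label x₀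
  have hℓ_eq_zero_iff : ∀ n x, ℓ n x = 0 ↔ P n x₀ x := fun n x => by rw [← hℓ₀ n, eq_comm, hℓ]
  let entry (x : S) : ℕ → ℤ
    | 0 => e x
    | n + 1 => σ n * ℓ n x
  have hfinite : ∀ x, (Function.support (entry x)).Finite := by
    intro x
    obtain ⟨N, hN⟩ := hexh x₀ x
    refine (Set.finite_Iic N).subset fun k hk => ?_
    rcases k with _ | n
    · exact Nat.zero_le N
    · by_contra hNn
      rw [Set.mem_Iic] at hNn
      exact hk (by simp [entry, (hℓ_eq_zero_iff n x).2 (hmono (by omega) _ _ hN)])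
  let code (x : S) : ℕ →₀ ℤ := Finsupp.ofSupportFinite (entry x) (hfinite x)
  have hcode_succ : ∀ n x y, code x (n + 1) = code y (n + 1) ↔ P n x y := fun n x y => by
    simp [code, entry, Finsupp.ofSupportFinite_coe, hσ n, hℓ]
  refine ⟨code, fun x y hxy => he ?_, fun n x y => ⟨fun h k hk => ?_, fun h => ?_⟩,
    fun n x hx => ?_, fun n x hx => ?_⟩
  · simpa [code, entry, Finsupp.ofSupportFinite_coe] using DFunLike.congr_fun hxy 0
  · obtain ⟨m, rfl⟩ := Nat.exists_eq_add_of_lt hk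
    exact (hcode_succ _ x y).2 (hmono (by omega) _ _ h)
  · exact (hcode_succ n x y).1 (h _ n.lt_succ_self)
  · simp [code, entry, Finsupp.ofSupportFinite_coe, (hℓ_eq_zero_iff n x).2 hx]
  · have hℓpos : 0 < (ℓ n x : ℤ) := by have := (hℓ_eq_zero_iff n x).not.2 hx; omega
    simpa [code, entry, Finsupp.ofSupportFinite_coe, ← mul_assoc] using
      mul_pos (mul_self_pos.2 (hσ n)) hℓpos

theorem exists_colex_code [Countable S] [Infinite S] (hequiv : ∀ n, Equivalence (P n))
    (hmono : Monotone P) (hfin : ∀ n x, {y | P n x y}.Finite) (hexh : ∀ x y, ∃ n, P n x y) :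
    ∃ code : S → ℕ →₀ ℤ, Function.Injective code ∧
      (∀ n x y, P n x y ↔ ∀ k, n < k → code x k = code y k) ∧
      (∀ x, ∃ y, toColex (code x) < toColex (code y)) ∧
      (∀ x, ∃ y, toColex (code y) < toColex (code x)) := by
  classical
  obtain ⟨x₀⟩ : Nonempty S := inferInstance
  have hgrow := infinite_setOf_exists_class_growth hmono hfin hexh x₀
  obtain ⟨code, hinj, hP, hzero, hsign⟩ := exists_colex_code_of_sign hequiv hmono hexh x₀
    (fun n => (-1) ^ Nat.count (fun k => ∃ y, P (k + 1) x₀ y ∧ ¬ P k x₀ y) n) (by simp)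
  have hstage : ∀ x N m, P N x₀ x → N ≤ m → ∃ y j, (∀ k, j < k → code x k = code y k) ∧
      code x j = 0 ∧ 0 < (-1) ^ m * code y j := by
    intro x N m hN hNm
    obtain ⟨k, hNk, ⟨y, hy, hky⟩, hcount⟩ := Nat.exists_ge_count_eq hgrow hNm
    have hx : P k x₀ x := hmono hNk _ _ hN
    refine ⟨y, k + 1, (hP (k + 1) x y).1 ?_, hzero k x hx, hcount ▸ hsign k y hky⟩
    exact (hequiv _).trans ((hequiv _).symm (hmono k.le_succ _ _ hx)) hy
  refine ⟨code, hinj, hP, fun x => ?_, fun x => ?_⟩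
  · obtain ⟨N, hN⟩ := hexh x₀ x
    obtain ⟨y, j, hagree, hx, hy⟩ := hstage x N (2 * N) hN (by omega)
    refine ⟨y, Finsupp.Colex.lt_iff.2 ⟨j, hagree, ?_⟩⟩
    simpa [pow_mul, hx] using hy
  · obtain ⟨N, hN⟩ := hexh x₀ x
    obtain ⟨y, j, hagree, hx, hy⟩ := hstage x N (2 * N + 1) hN (by omega)
    refine ⟨y, Finsupp.Colex.lt_iff.2 ⟨j, fun k hk => (hagree k hk).symm, ?_⟩⟩
    simpa [pow_succ, pow_mul, hx] using hy

end Exhaustion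

theorem stmt13 {S : Type*} [Countable S] [Infinite S]
    (P : ℕ → S → S → Prop) (hequiv : ∀ n, Equivalence (P n))
    (hfin : ∀ (n : ℕ) (x : S), {y | P n x y}.Finite)
    (hcoarser : ∀ (n : ℕ) (x y : S), P n x y → P (n + 1) x y)
    (hexh : ∀ x y : S, ∃ n, P n x y) :
    ∃ f : S ≃ ℤ, ∀ (n : ℕ) (x y z : S), P n x y → f x ≤ f z → f z ≤ f y → P n x z := by
  have hmono : Monotone P := monotone_nat_of_le_succ hcoarser
  obtain ⟨code, hinj, hP, hmax, hmin⟩ := exists_colex_code hequiv hmono hfin hexh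
  let : LinearOrder S := LinearOrder.lift' (toColex ∘ code) hinj
  have hconn : ∀ n x, {y | P n x y}.OrdConnected := fun n x => by
    simp only [hP]
    exact (Finsupp.Colex.ordConnected_setOf_forall_lt_eq n (code x)).preimage_mono
      (f := toColex ∘ code) fun _ _ h => h
  have : NoMaxOrder S := ⟨hmax⟩
  have : NoMinOrder S := ⟨hmin⟩
  obtain ⟨f⟩ := nonempty_orderIso_int_of_finite_Icc fun a b => by
    obtain ⟨n, hn⟩ := hexh a b
    exact (hfin n a).subset ((hconn n a).out ((hequiv n).refl a) hn)
  exact ⟨f.toEquiv, fun n x y z hxy hxz hzy =>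
    (hconn n x).out ((hequiv n).refl x) hxy ⟨f.le_iff_le.1 hxz, f.le_iff_le.1 hzy⟩⟩
end
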